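/- arXiv:2410.06829 — 2 statements merged into one kernel-verified Lean document; each statement's English description precedes it below -/
import Mathlib

section
/- Let k ≥ 2 be an integer and δ ≥ 1 be an odd integer, and let G = K_δ ∨ (⌊(2k+1)δ/2⌋ + 1)·K_1, the join of a complete graph on δ vertices with ⌊(2k+1)δ/2⌋ + 1 isolated vertices, and let n be the order of G. Then: (i) the minimum degree of G equals δ; (ii) 2n = (2k+3)δ + 1, so that (2k+3)·δ = 2n − 1; and (iii) there exists a subset S ⊆ V(G) (namely S = V(K_δ), with |S| = δ) such that 2·i(G−S) > (2k+1)·|S|. -/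
/-- The number of isolated vertices of the induced subgraph `G − S`:
vertices outside `S` having no neighbor outside `S`. -/
def isoCount {V : Type*} [Fintype V] [DecidableEq V] (G : SimpleGraph V)
    [DecidableRel G.Adj] (S : Finset V) : ℕ :=
  (Finset.univ.filter (fun v => v ∉ S ∧ ∀ w, w ∉ S → ¬ G.Adj v w)).card

/-- Rank of a vertex of `K_t ∨ (K_a ∪ b·K_1)`: `0` on `K_t`, `1` on `K_a`, `2` on the
isolated part. -/
def rnk {t a b : ℕ} : Fin t ⊕ (Fin a ⊕ Fin b) → ℕ
  | Sum.inl _ => 0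
  | Sum.inr (Sum.inl _) => 1
  | Sum.inr (Sum.inr _) => 2

/-- The join `K_t ∨ (K_a ∪ b·K_1)`: every vertex of `K_t` is adjacent to all other
vertices, and the vertices of `K_a` are moreover pairwise adjacent.
(`K_t ∨ b·K_1` is the case `a = 0`.) -/
def joinGraph (t a b : ℕ) : SimpleGraph (Fin t ⊕ (Fin a ⊕ Fin b)) where
  Adj u v := u ≠ v ∧ (rnk u = 0 ∨ rnk v = 0 ∨ (rnk u = 1 ∧ rnk v = 1))
  symm := ⟨by rintro u v ⟨h1, h2⟩; exact ⟨h1.symm, by tauto⟩⟩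
  loopless := ⟨by rintro u ⟨h, -⟩; exact h rfl⟩

instance (t a b : ℕ) : DecidableRel (joinGraph t a b).Adj := fun u v =>
  decidable_of_iff (u ≠ v ∧ (rnk u = 0 ∨ rnk v = 0 ∨ (rnk u = 1 ∧ rnk v = 1))) Iff.rfl

/-!
The vertices of `K_δ` see everything, the other `⌊(2k+1)δ/2⌋ + 1` vertices see exactly `K_δ`,
so the minimum degree is `δ`. Deleting `S = V(K_δ)` isolates all of them, and
`2(⌊m/2⌋ + 1) > m` for every `m`; the oddness of `δ` is what makes `2n = (2k+3)δ + 1` exact.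
-/

open Finset SimpleGraph

namespace joinGraph

variable (t a b : ℕ)

/-- The vertex set of `K_t` inside `K_t ∨ (K_a ∪ b·K_1)`. -/
abbrev centre : Finset (Fin t ⊕ (Fin a ⊕ Fin b)) := univ.map Function.Embedding.inl

lemma neighborFinset_inl (u : Fin t) :
    (joinGraph t a b).neighborFinset (Sum.inl u) = univ.erase (Sum.inl u) := by
  ext w
  rw [mem_neighborFinset]
  rcases w with w | w | w <;> simp [joinGraph, rnk, ne_comm]

lemma degree_inl (u : Fin t) : (joinGraph t a b).degree (Sum.inl u) = t + (a + b) - 1 := by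
  simp [← card_neighborFinset_eq_degree, neighborFinset_inl]

lemma neighborFinset_inr_inr (u : Fin b) :
    (joinGraph t a b).neighborFinset (Sum.inr (Sum.inr u)) = centre t a b := by
  ext w
  rw [mem_neighborFinset]
  rcases w with w | w | w <;> simp [joinGraph, rnk]

lemma degree_inr_inr (u : Fin b) : (joinGraph t a b).degree (Sum.inr (Sum.inr u)) = t := by
  simp [← card_neighborFinset_eq_degree, neighborFinset_inr_inr]

lemma isoCount_centre : isoCount (joinGraph t 0 b) (centre t 0 b) = b := by
  have hiso : univ.filter (fun v => v ∉ centre t 0 b ∧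
      ∀ w, w ∉ centre t 0 b → ¬ (joinGraph t 0 b).Adj v w) =
      univ.map (Function.Embedding.inr.trans Function.Embedding.inr) := by
    ext (v | v | v)
    · simp
    · exact v.elim0
    · simp only [mem_filter, mem_univ, true_and, mem_map, Function.Embedding.trans_apply,
        Function.Embedding.inr_apply, Sum.inr.injEq, exists_eq, iff_true]
      refine ⟨by simp, ?_⟩
      rintro (w | w | w) hw
      · exact absurd (by simp) hw
      · exact w.elim0
      · simp [joinGraph, rnk]
  rw [isoCount, hiso, card_map, card_univ, Fintype.card_fin]

end joinGraph

theorem stmt15_general (k δ : ℕ) (hδodd : Odd δ) :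
    ((∀ v, δ ≤ (joinGraph δ 0 (((2 * k + 1) * δ) / 2 + 1)).degree v)
      ∧ (∃ v, (joinGraph δ 0 (((2 * k + 1) * δ) / 2 + 1)).degree v = δ))
    ∧ 2 * Fintype.card (Fin δ ⊕ (Fin 0 ⊕ Fin (((2 * k + 1) * δ) / 2 + 1)))
        = (2 * k + 3) * δ + 1
    ∧ ∃ S : Finset (Fin δ ⊕ (Fin 0 ⊕ Fin (((2 * k + 1) * δ) / 2 + 1))),
        S.card = δ ∧
        (2 * k + 1) * S.card
          < 2 * isoCount (joinGraph δ 0 (((2 * k + 1) * δ) / 2 + 1)) S := by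
  set b := ((2 * k + 1) * δ) / 2 + 1
  have hfloor : 2 * (((2 * k + 1) * δ) / 2) + 1 = (2 * k + 1) * δ :=
    Nat.two_mul_div_two_add_one_of_odd ((odd_two_mul_add_one k).mul hδodd)
  refine ⟨⟨?_, ⟨Sum.inr (Sum.inr 0), joinGraph.degree_inr_inr δ 0 b 0⟩⟩, ?_,
    ⟨joinGraph.centre δ 0 b, by simp, ?_⟩⟩
  · rintro (u | u | u)
    · rw [joinGraph.degree_inl]; omega
    · exact u.elim0
    · rw [joinGraph.degree_inr_inr]
  · simp only [Fintype.card_sum, Fintype.card_fin]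
    rw [show (2 * k + 3) * δ = (2 * k + 1) * δ + 2 * δ by ring]
    omega
  · rw [joinGraph.isoCount_centre, card_map, card_univ, Fintype.card_fin]
    omega

/-- **Remark 4.1.** For `k ≥ 2` and odd `δ ≥ 1`, the graph
`G = K_δ ∨ (⌊(2k+1)δ/2⌋ + 1)·K_1` of order `n` satisfies: (i) its minimum degree equals
`δ`; (ii) `2n = (2k+3)δ + 1`; and (iii) there is a vertex subset `S` with `|S| = δ`
(namely `V(K_δ)`) such that `2·i(G−S) > (2k+1)·|S|`. -/
theorem stmt15 (k δ : ℕ) (hk : 2 ≤ k) (hδ1 : 1 ≤ δ) (hδodd : Odd δ) :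
    ((∀ v, δ ≤ (joinGraph δ 0 (((2 * k + 1) * δ) / 2 + 1)).degree v)
      ∧ (∃ v, (joinGraph δ 0 (((2 * k + 1) * δ) / 2 + 1)).degree v = δ))
    ∧ 2 * Fintype.card (Fin δ ⊕ (Fin 0 ⊕ Fin (((2 * k + 1) * δ) / 2 + 1)))
        = (2 * k + 3) * δ + 1
    ∧ ∃ S : Finset (Fin δ ⊕ (Fin 0 ⊕ Fin (((2 * k + 1) * δ) / 2 + 1))),
        S.card = δ ∧
        (2 * k + 1) * S.card
          < 2 * isoCount (joinGraph δ 0 (((2 * k + 1) * δ) / 2 + 1)) S :=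
  stmt15_general k δ hδodd
end

section
/- Let k ≥ 2 and t ≥ 0 be integers, and let G = K_{2+2t} ∨ ((1+t)(2k+1) + 1)·K_1, the join of a complete graph on 2+2t vertices with (1+t)(2k+1)+1 isolated vertices. Then: (i) the minimum degree of G equals 2+2t; (ii) the independence number of G equals (1+t)(2k+1)+1, so that (2k+1)·δ(G) = 2·(α(G) − 1); and (iii) there exists a subset S ⊆ V(G) (namely S = V(K_{2+2t}), with |S| = 2+2t) such that 2·i(G−S) > (2k+1)·|S|. -/
/-- The independence number of `G`: the maximum size of a set of pairwise
nonadjacent vertices. -/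
def indepNum {V : Type*} [Fintype V] [DecidableEq V] (G : SimpleGraph V)
    [DecidableRel G.Adj] : ℕ :=
  (Finset.univ.filter
    (fun A : Finset V => ∀ x ∈ A, ∀ y ∈ A, x ≠ y → ¬ G.Adj x y)).sup Finset.card

open Finset

section IndepNum

variable {V : Type*} [Fintype V] [DecidableEq V] {G : SimpleGraph V} [DecidableRel G.Adj]

lemma card_le_indepNum {A : Finset V} (hA : ∀ x ∈ A, ∀ y ∈ A, x ≠ y → ¬ G.Adj x y) :
    #A ≤ indepNum G :=
  le_sup (f := card) (mem_filter.2 ⟨mem_univ A, hA⟩)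

lemma indepNum_le {k : ℕ}
    (h : ∀ A : Finset V, (∀ x ∈ A, ∀ y ∈ A, x ≠ y → ¬ G.Adj x y) → #A ≤ k) :
    indepNum G ≤ k :=
  Finset.sup_le fun A hA => h A (mem_filter.1 hA).2

end IndepNum

section JoinGraph

variable {t a b : ℕ}

def completePart (t a b : ℕ) : Finset (Fin t ⊕ (Fin a ⊕ Fin b)) :=
  univ.map Function.Embedding.inl

def isolatedPart (t a b : ℕ) : Finset (Fin t ⊕ (Fin a ⊕ Fin b)) :=
  univ.map (Function.Embedding.inr.trans Function.Embedding.inr)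

@[simp]
lemma card_completePart : #(completePart t a b) = t := by
  simp [completePart]

@[simp]
lemma card_isolatedPart : #(isolatedPart t a b) = b := by
  simp [isolatedPart]

lemma mem_completePart {v : Fin t ⊕ (Fin a ⊕ Fin b)} : v ∈ completePart t a b ↔ v.isLeft := by
  cases v <;> simp [completePart]

lemma mem_isolatedPart_iff_of_zero {v : Fin t ⊕ (Fin 0 ⊕ Fin b)} :
    v ∈ isolatedPart t 0 b ↔ v ∉ completePart t 0 b := by
  rcases v with i | x | j
  · simp [isolatedPart, completePart]
  · exact x.elim0
  · simp [isolatedPart, completePart]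

lemma joinGraph_adj_inl (i : Fin t) (v : Fin t ⊕ (Fin a ⊕ Fin b)) :
    (joinGraph t a b).Adj (Sum.inl i) v ↔ Sum.inl i ≠ v :=
  ⟨And.left, fun h => ⟨h, Or.inl rfl⟩⟩

lemma joinGraph_adj_inr_inr (j : Fin b) (v : Fin t ⊕ (Fin a ⊕ Fin b)) :
    (joinGraph t a b).Adj (Sum.inr (Sum.inr j)) v ↔ v ∈ completePart t a b := by
  rw [mem_completePart]
  rcases v with i | x | j' <;> simp [joinGraph, rnk]

lemma neighborFinset_joinGraph_inl (i : Fin t) :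
    (joinGraph t a b).neighborFinset (Sum.inl i) = univ.erase (Sum.inl i) := by
  ext v
  simp [joinGraph_adj_inl, eq_comm]

lemma neighborFinset_joinGraph_inr_inr (j : Fin b) :
    (joinGraph t a b).neighborFinset (Sum.inr (Sum.inr j)) = completePart t a b := by
  ext v
  simp [joinGraph_adj_inr_inr]

lemma degree_joinGraph_inl (i : Fin t) :
    (joinGraph t a b).degree (Sum.inl i) = t + (a + b) - 1 := by
  simp [← SimpleGraph.card_neighborFinset_eq_degree, neighborFinset_joinGraph_inl]

lemma degree_joinGraph_inr_inr (j : Fin b) :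
    (joinGraph t a b).degree (Sum.inr (Sum.inr j)) = t := by
  simp [← SimpleGraph.card_neighborFinset_eq_degree, neighborFinset_joinGraph_inr_inr]

lemma le_degree_joinGraph (hb : b ≠ 0) (v : Fin t ⊕ (Fin 0 ⊕ Fin b)) :
    t ≤ (joinGraph t 0 b).degree v := by
  rcases v with i | x | j
  · rw [degree_joinGraph_inl]; omega
  · exact x.elim0
  · rw [degree_joinGraph_inr_inr]

lemma indepNum_joinGraph (hb : b ≠ 0) : indepNum (joinGraph t 0 b) = b := by
  refine le_antisymm (indepNum_le fun A hA => ?_) ?_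
  · by_cases hl : ∃ i, Sum.inl i ∈ A
    · obtain ⟨i, hi⟩ := hl
      have hsub : A ⊆ {Sum.inl i} := fun v hv => by
        by_contra hne
        rw [mem_singleton] at hne
        exact hA _ hi _ hv (Ne.symm hne) ((joinGraph_adj_inl i v).2 (Ne.symm hne))
      have := card_le_card hsub
      rw [card_singleton] at this
      omega
    · have hsub : A ⊆ isolatedPart t 0 b := fun v hv => by
        rw [mem_isolatedPart_iff_of_zero, mem_completePart]
        rcases v with i | x | j
        · exact absurd ⟨i, hv⟩ hl
        · exact x.elim0
        · simp
      simpa using card_le_card hsub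
  · have hindep : ∀ x ∈ isolatedPart t 0 b, ∀ y ∈ isolatedPart t 0 b, x ≠ y →
        ¬ (joinGraph t 0 b).Adj x y := by
      simp only [isolatedPart, mem_map, mem_univ, true_and, Function.Embedding.trans_apply,
        Function.Embedding.inr_apply]
      rintro _ ⟨j, rfl⟩ _ ⟨j', rfl⟩ -
      simp [joinGraph_adj_inr_inr, completePart]
    simpa using card_le_indepNum hindep

lemma isoCount_joinGraph_completePart :
    isoCount (joinGraph t 0 b) (completePart t 0 b) = b := by
  have : univ.filter (fun v => v ∉ completePart t 0 b ∧
      ∀ w, w ∉ completePart t 0 b → ¬ (joinGraph t 0 b).Adj v w) = isolatedPart t 0 b := by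
    ext v
    simp only [mem_filter, mem_univ, true_and, mem_isolatedPart_iff_of_zero, and_iff_left_iff_imp]
    intro hv w hw hadj
    rcases v with i | x | j
    · exact hv (mem_completePart.2 rfl)
    · exact x.elim0
    · exact hw ((joinGraph_adj_inr_inr j w).1 hadj)
  rw [isoCount, this, card_isolatedPart]

end JoinGraph

theorem stmt16_general (k t : ℕ) :
    ((∀ v, 2 + 2 * t ≤ (joinGraph (2 + 2 * t) 0 ((1 + t) * (2 * k + 1) + 1)).degree v)
      ∧ (∃ v, (joinGraph (2 + 2 * t) 0 ((1 + t) * (2 * k + 1) + 1)).degree v = 2 + 2 * t))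
    ∧ indepNum (joinGraph (2 + 2 * t) 0 ((1 + t) * (2 * k + 1) + 1))
        = (1 + t) * (2 * k + 1) + 1
    ∧ ∃ S : Finset (Fin (2 + 2 * t) ⊕ (Fin 0 ⊕ Fin ((1 + t) * (2 * k + 1) + 1))),
        S.card = 2 + 2 * t ∧
        (2 * k + 1) * S.card
          < 2 * isoCount (joinGraph (2 + 2 * t) 0 ((1 + t) * (2 * k + 1) + 1)) S := by
  have hb : (1 + t) * (2 * k + 1) + 1 ≠ 0 := Nat.succ_ne_zero _
  refine ⟨⟨le_degree_joinGraph hb, ⟨Sum.inr (Sum.inr 0), degree_joinGraph_inr_inr 0⟩⟩,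
    indepNum_joinGraph hb, completePart _ _ _, card_completePart, ?_⟩
  rw [isoCount_joinGraph_completePart, card_completePart]
  nlinarith

/-- **Remark 5.1.** For integers `k ≥ 2` and `t ≥ 0`, the graph
`G = K_{2+2t} ∨ ((1+t)(2k+1)+1)·K_1` satisfies: (i) its minimum degree equals `2+2t`;
(ii) its independence number equals `(1+t)(2k+1)+1`; and (iii) there is a vertex subset
`S` with `|S| = 2+2t` (namely `V(K_{2+2t})`) such that `2·i(G−S) > (2k+1)·|S|`. -/
theorem stmt16 (k t : ℕ) (hk : 2 ≤ k) :
    ((∀ v, 2 + 2 * t ≤ (joinGraph (2 + 2 * t) 0 ((1 + t) * (2 * k + 1) + 1)).degree v)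
      ∧ (∃ v, (joinGraph (2 + 2 * t) 0 ((1 + t) * (2 * k + 1) + 1)).degree v = 2 + 2 * t))
    ∧ indepNum (joinGraph (2 + 2 * t) 0 ((1 + t) * (2 * k + 1) + 1))
        = (1 + t) * (2 * k + 1) + 1
    ∧ ∃ S : Finset (Fin (2 + 2 * t) ⊕ (Fin 0 ⊕ Fin ((1 + t) * (2 * k + 1) + 1))),
        S.card = 2 + 2 * t ∧
        (2 * k + 1) * S.card
          < 2 * isoCount (joinGraph (2 + 2 * t) 0 ((1 + t) * (2 * k + 1) + 1)) S :=
  stmt16_general k t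
end
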